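/- Let D ⊆ ℝ² be an open set with coordinates (u,v) such that u + v ≠ 0 on D, and let Q, R : D → ℝ be smooth functions satisfying ∂_v Q = ∂_u R, Q·R = 2 ∂_u R, and Q·R < 0 on D. Define H(u,v) = 1/(u + v) and ω(u,v) = log(−(u+v)² Q(u,v) R(u,v)). Then (ω, Q, R, H) satisfies the Gauss equation (G₀) and the Codazzi equations (C₀) on D. -/

import Mathlib

noncomputable section

/-- Partial derivative in the first variable. -/
def pd1 (f : ℝ → ℝ → ℝ) (u v : ℝ) : ℝ := deriv (fun x => f x v) u

/-- Partial derivative in the second variable. -/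
def pd2 (f : ℝ → ℝ → ℝ) (u v : ℝ) : ℝ := deriv (fun y => f u y) v

/-- The Gauss equation (G_c) at a point. -/
def GaussEq (c : ℝ) (ω Q R H : ℝ → ℝ → ℝ) (u v : ℝ) : Prop :=
  pd2 (pd1 ω) u v + (1 / 2) * ((H u v) ^ 2 + c) * Real.exp (ω u v)
    - 2 * Q u v * R u v * Real.exp (-ω u v) = 0

/-- The Codazzi equations (C_c) at a point. -/
def CodazziEq (ω Q R H : ℝ → ℝ → ℝ) (u v : ℝ) : Prop :=
  pd1 H u v = 2 * Real.exp (-ω u v) * pd2 Q u v ∧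
  pd2 H u v = 2 * Real.exp (-ω u v) * pd1 R u v

/-- Smoothness of a two-variable function on a set. -/
def Smooth2 (f : ℝ → ℝ → ℝ) (s : Set (ℝ × ℝ)) : Prop :=
  ContDiffOn ℝ (⊤ : ℕ∞) (fun p : ℝ × ℝ => f p.1 p.2) s

open Filter Topology

private lemma slice1 {E : Type*} [NormedAddCommGroup E] [NormedSpace ℝ E]
    (f : ℝ × ℝ → E) (u v : ℝ) (hf : DifferentiableAt ℝ f (u, v)) :
    HasDerivAt (fun x => f (x, v)) (fderiv ℝ f (u, v) (1, 0)) u := by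
  have h : HasDerivAt (fun x : ℝ => ((x, v) : ℝ × ℝ)) (1, 0) u :=
    (hasDerivAt_id u).prodMk (hasDerivAt_const u v)
  simpa [Function.comp_def] using hf.hasFDerivAt.comp_hasDerivAt u h

private lemma slice2 {E : Type*} [NormedAddCommGroup E] [NormedSpace ℝ E]
    (f : ℝ × ℝ → E) (u v : ℝ) (hf : DifferentiableAt ℝ f (u, v)) :
    HasDerivAt (fun y => f (u, y)) (fderiv ℝ f (u, v) (0, 1)) v := by
  have h : HasDerivAt (fun y : ℝ => ((u, y) : ℝ × ℝ)) (0, 1) v :=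
    (hasDerivAt_const v u).prodMk (hasDerivAt_id v)
  simpa [Function.comp_def] using hf.hasFDerivAt.comp_hasDerivAt v h

/-- Section 5.2, equation (5.9): every solution of the degenerate
equation `QR = 2R_u` (with the Codazzi relation `Q_v = R_u`) with `QR < 0` defines,
via `H = 1/(u + v)` and `e^ω = −(u + v)²QR`, a solution of the Gauss and Codazzi
equations, i.e. a timelike HIMC surface in Minkowski 3-space. -/
theorem statement17
    (D : Set (ℝ × ℝ)) (hDopen : IsOpen D)
    (hsum : ∀ u v, (u, v) ∈ D → u + v ≠ 0)
    (Q R : ℝ → ℝ → ℝ) (hQ : Smooth2 Q D) (hR : Smooth2 R D)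
    (hcod : ∀ u v, (u, v) ∈ D → pd2 Q u v = pd1 R u v)
    (hdeg : ∀ u v, (u, v) ∈ D → Q u v * R u v = 2 * pd1 R u v)
    (hneg : ∀ u v, (u, v) ∈ D → Q u v * R u v < 0)
    (H ω : ℝ → ℝ → ℝ)
    (hH : ∀ u v, H u v = 1 / (u + v))
    (hω : ∀ u v, ω u v = Real.log (-((u + v) ^ 2 * Q u v * R u v))) :
    ∀ u v, (u, v) ∈ D → GaussEq 0 ω Q R H u v ∧ CodazziEq ω Q R H u v := by
  -- the uncurried functions
  set F : ℝ × ℝ → ℝ := fun q => Q q.1 q.2 with hFdef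
  set G : ℝ × ℝ → ℝ := fun q => R q.1 q.2 with hGdef
  have hFd : ∀ q ∈ D, DifferentiableAt ℝ F q := fun q hq =>
    (hQ.contDiffAt (hDopen.mem_nhds hq)).differentiableAt (by simp)
  have hGd : ∀ q ∈ D, DifferentiableAt ℝ G q := fun q hq =>
    (hR.contDiffAt (hDopen.mem_nhds hq)).differentiableAt (by simp)
  -- partial derivatives of Q and R at points of D
  have hQ1 : ∀ x y, (x, y) ∈ D →
      HasDerivAt (fun t => Q t y) (fderiv ℝ F (x, y) (1, 0)) x := fun x y hxy =>
    slice1 F x y (hFd _ hxy)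
  have hQ2 : ∀ x y, (x, y) ∈ D →
      HasDerivAt (fun t => Q x t) (fderiv ℝ F (x, y) (0, 1)) y := fun x y hxy =>
    slice2 F x y (hFd _ hxy)
  have hR1 : ∀ x y, (x, y) ∈ D →
      HasDerivAt (fun t => R t y) (fderiv ℝ G (x, y) (1, 0)) x := fun x y hxy =>
    slice1 G x y (hGd _ hxy)
  -- basic non-vanishing facts
  have hQne : ∀ x y, (x, y) ∈ D → Q x y ≠ 0 := fun x y hxy =>
    left_ne_zero_of_mul (ne_of_lt (hneg x y hxy))
  have hRne : ∀ x y, (x, y) ∈ D → R x y ≠ 0 := fun x y hxy =>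
    right_ne_zero_of_mul (ne_of_lt (hneg x y hxy))
  -- values of the partial derivatives dictated by the hypotheses
  have hRu : ∀ x y, (x, y) ∈ D →
      fderiv ℝ G (x, y) (1, 0) = Q x y * R x y / 2 := by
    intro x y hxy
    have h1 : pd1 R x y = fderiv ℝ G (x, y) (1, 0) := (hR1 x y hxy).deriv
    have := hdeg x y hxy
    rw [h1] at this; linarith
  have hQv : ∀ x y, (x, y) ∈ D →
      fderiv ℝ F (x, y) (0, 1) = Q x y * R x y / 2 := by
    intro x y hxy
    have h1 : pd2 Q x y = fderiv ℝ F (x, y) (0, 1) := (hQ2 x y hxy).deriv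
    have h2 : pd1 R x y = fderiv ℝ G (x, y) (1, 0) := (hR1 x y hxy).deriv
    have := hcod x y hxy
    rw [h1, h2, hRu x y hxy] at this; exact this
  -- positivity of the argument of the logarithm
  have hpos : ∀ x y, (x, y) ∈ D → 0 < -((x + y) ^ 2 * Q x y * R x y) := by
    intro x y hxy
    have hx := hsum x y hxy
    have hs : (0:ℝ) < (x + y) ^ 2 :=
      lt_of_le_of_ne (sq_nonneg _) (Ne.symm (pow_ne_zero 2 hx))
    have h2 : (x + y) ^ 2 * (Q x y * R x y) < 0 :=
      mul_neg_of_pos_of_neg hs (hneg x y hxy)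
    nlinarith
  -- formula for pd1 ω on D
  have hpd1ω : ∀ x y, (x, y) ∈ D →
      pd1 ω x y = 2 * (x + y)⁻¹ + fderiv ℝ F (x, y) (1, 0) / Q x y + Q x y / 2 := by
    intro x y hxy
    have hx : x + y ≠ 0 := hsum x y hxy
    have hq := hQne x y hxy
    have hr := hRne x y hxy
    have hg : HasDerivAt (fun t => -((t + y) ^ 2 * Q t y * R t y))
        (-(((2 * (x + y) ^ 1 * 1) * Q x y + (x + y) ^ 2 * fderiv ℝ F (x, y) (1, 0)) * R x y
          + (x + y) ^ 2 * Q x y * fderiv ℝ G (x, y) (1, 0))) x := by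
      have h1 : HasDerivAt (fun t : ℝ => (t + y) ^ 2) (2 * (x + y) ^ 1 * 1) x :=
        (((hasDerivAt_id x).add_const y).pow 2)
      exact (((h1.mul (hQ1 x y hxy)).mul (hR1 x y hxy)).neg)
    have hlog : HasDerivAt (fun t => ω t y)
        ((-(((2 * (x + y) ^ 1 * 1) * Q x y + (x + y) ^ 2 * fderiv ℝ F (x, y) (1, 0)) * R x y
          + (x + y) ^ 2 * Q x y * fderiv ℝ G (x, y) (1, 0)))
          / (-((x + y) ^ 2 * Q x y * R x y))) x := by
      have h := hg.log (ne_of_gt (hpos x y hxy))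
      have he : (fun t => ω t y) = fun t => Real.log (-((t + y) ^ 2 * Q t y * R t y)) := by
        funext t; exact hω t y
      rw [he]; exact h
    have hval := hlog.deriv
    rw [pd1, hval, hRu x y hxy]
    field_simp
  -- point under consideration
  intro u v huv
  have hs : u + v ≠ 0 := hsum u v huv
  have hq := hQne u v huv
  have hr := hRne u v huv
  -- exponentials of ω
  have hexp : Real.exp (ω u v) = -((u + v) ^ 2 * Q u v * R u v) := by
    rw [hω]; exact Real.exp_log (hpos u v huv)
  have hexpn : Real.exp (-ω u v) = (-((u + v) ^ 2 * Q u v * R u v))⁻¹ := by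
    rw [Real.exp_neg, hexp]
  -- derivative of H
  have hH1 : pd1 H u v = -1 / (u + v) ^ 2 := by
    have h := ((hasDerivAt_id u).add_const v).inv hs
    have he : (fun x => H x v) = fun x => (x + v)⁻¹ := by
      funext x; rw [hH, one_div]
    rw [pd1, he]
    simpa using (show deriv (fun x => (x + v)⁻¹) u = _ from h.deriv)
  have hH2 : pd2 H u v = -1 / (u + v) ^ 2 := by
    have h := ((hasDerivAt_id v).const_add u).inv hs
    have he : (fun y => H u y) = fun y => (u + y)⁻¹ := by
      funext y; rw [hH, one_div]
    rw [pd2, he]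
    simpa using (show deriv (fun y => (u + y)⁻¹) v = _ from h.deriv)
  -- values of pd2 Q and pd1 R at the point
  have hQ2v : pd2 Q u v = Q u v * R u v / 2 := by
    have h : pd2 Q u v = fderiv ℝ F (u, v) (0, 1) := (hQ2 u v huv).deriv
    rw [h, hQv u v huv]
  have hR1v : pd1 R u v = Q u v * R u v / 2 := by
    have h : pd1 R u v = fderiv ℝ G (u, v) (1, 0) := (hR1 u v huv).deriv
    rw [h, hRu u v huv]
  -- Codazzi equations
  have hcodazzi : CodazziEq ω Q R H u v := by
    constructor
    · rw [hH1, hexpn, hQ2v]; field_simp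
    · rw [hH2, hexpn, hR1v]; field_simp
  refine ⟨?_, hcodazzi⟩
  -- ===== Gauss equation =====
  -- second derivative machinery for Q
  have hFc := hQ.contDiffAt (hDopen.mem_nhds huv)
  have hAc : ContDiffAt ℝ ((⊤ : ℕ∞) : WithTop ℕ∞) (fderiv ℝ F) (u, v) :=
    hFc.fderiv_right (by exact_mod_cast le_top)
  have hAd : DifferentiableAt ℝ (fderiv ℝ F) (u, v) :=
    hAc.differentiableAt (by simp)
  -- symmetry of the second derivative (Clairaut)
  have hsymm : fderiv ℝ (fderiv ℝ F) (u, v) (0, 1) (1, 0)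
      = fderiv ℝ (fderiv ℝ F) (u, v) (1, 0) (0, 1) := by
    apply second_derivative_symmetric_of_eventually (f := F) (f' := fderiv ℝ F)
    · filter_upwards [hDopen.mem_nhds huv] with q hq using (hFd q hq).hasFDerivAt
    · exact hAd.hasFDerivAt
  -- derivative in y of  y ↦ Q_u(u,y)
  have hDuv : HasDerivAt (fun y => fderiv ℝ F (u, y) (1, 0))
      (fderiv ℝ (fderiv ℝ F) (u, v) (0, 1) (1, 0)) v := by
    have h1 := slice2 (fderiv ℝ F) u v hAd
    simpa [Function.comp_def] using
      (ContinuousLinearMap.apply ℝ ℝ ((1, 0) : ℝ × ℝ)).hasFDerivAt.comp_hasDerivAt v h1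
  -- identify the mixed second derivative using the degenerate equation
  have hmemu : ∀ᶠ x in 𝓝 u, (x, v) ∈ D := by
    have hc : Continuous fun x : ℝ => ((x, v) : ℝ × ℝ) := Continuous.prodMk_left v
    exact hc.continuousAt.preimage_mem_nhds (hDopen.mem_nhds huv)
  have hmixed : fderiv ℝ (fderiv ℝ F) (u, v) (1, 0) (0, 1)
      = fderiv ℝ F (u, v) (1, 0) * R u v / 2 + Q u v * (Q u v * R u v / 2) / 2 := by
    have h3 : HasDerivAt (fun x => fderiv ℝ F (x, v) (0, 1))
        (fderiv ℝ (fderiv ℝ F) (u, v) (1, 0) (0, 1)) u := by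
      have h1 := slice1 (fderiv ℝ F) u v hAd
      simpa [Function.comp_def] using
        (ContinuousLinearMap.apply ℝ ℝ ((0, 1) : ℝ × ℝ)).hasFDerivAt.comp_hasDerivAt u h1
    have heq : (fun x => Q x v * R x v / 2) =ᶠ[𝓝 u] fun x => fderiv ℝ F (x, v) (0, 1) := by
      filter_upwards [hmemu] with x hx
      rw [hQv x v hx]
    have h3' : HasDerivAt (fun x => Q x v * R x v / 2)
        (fderiv ℝ (fderiv ℝ F) (u, v) (1, 0) (0, 1)) u := h3.congr_of_eventuallyEq heq
    have h4 : HasDerivAt (fun x => Q x v * R x v / 2)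
        ((fderiv ℝ F (u, v) (1, 0) * R u v + Q u v * fderiv ℝ G (u, v) (1, 0)) / 2) u :=
      ((hQ1 u v huv).mul (hR1 u v huv)).div_const 2
    have := h3'.unique h4
    rw [this, hRu u v huv]
    ring
  -- derivative of the explicit formula for pd1 ω in the second variable
  have hmemv : ∀ᶠ y in 𝓝 v, (u, y) ∈ D := by
    have hc : Continuous fun y : ℝ => ((u, y) : ℝ × ℝ) := Continuous.prodMk_right u
    exact hc.continuousAt.preimage_mem_nhds (hDopen.mem_nhds huv)
  have hφ : HasDerivAt
      (fun y => 2 * (u + y)⁻¹ + fderiv ℝ F (u, y) (1, 0) / Q u y + Q u y / 2)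
      (2 * (-1 / (u + v) ^ 2)
        + ((fderiv ℝ F (u, v) (1, 0) * R u v / 2 + Q u v * (Q u v * R u v / 2) / 2) * Q u v
            - fderiv ℝ F (u, v) (1, 0) * (Q u v * R u v / 2)) / Q u v ^ 2
        + (Q u v * R u v / 2) / 2) v := by
    have h1 : HasDerivAt (fun y => 2 * (u + y)⁻¹) (2 * (-1 / (u + v) ^ 2)) v := by
      have := (((hasDerivAt_id v).const_add u).inv hs).const_mul 2
      simpa using this
    have hDuv' : HasDerivAt (fun y => fderiv ℝ F (u, y) (1, 0))
        (fderiv ℝ F (u, v) (1, 0) * R u v / 2 + Q u v * (Q u v * R u v / 2) / 2) v := by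
      rw [← hmixed, ← hsymm]; exact hDuv
    have hQy : HasDerivAt (fun y => Q u y) (Q u v * R u v / 2) v := by
      have := hQ2 u v huv
      rwa [hQv u v huv] at this
    exact (h1.add (hDuv'.div hQy hq)).add (hQy.div_const 2)
  -- the second mixed derivative of ω
  have hωuv : pd2 (pd1 ω) u v
      = 2 * (-1 / (u + v) ^ 2)
        + ((fderiv ℝ F (u, v) (1, 0) * R u v / 2 + Q u v * (Q u v * R u v / 2) / 2) * Q u v
            - fderiv ℝ F (u, v) (1, 0) * (Q u v * R u v / 2)) / Q u v ^ 2
        + (Q u v * R u v / 2) / 2 := by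
    have heq : (fun y => pd1 ω u y) =ᶠ[𝓝 v]
        fun y => 2 * (u + y)⁻¹ + fderiv ℝ F (u, y) (1, 0) / Q u y + Q u y / 2 := by
      filter_upwards [hmemv] with y hy
      exact hpd1ω u y hy
    rw [pd2, heq.deriv_eq, hφ.deriv]
  -- put everything together
  rw [GaussEq, hωuv, hexp, hexpn, hH u v]
  have hsq : ((u + v) ^ 2 : ℝ) ≠ 0 := pow_ne_zero 2 hs
  field_simp
  ring
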